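/- A double groupoid τ is exclusive (τ⌟ = τ•) if and only if the boundary of any square is determined by one horizontal edge and one vertical edge: if squares X and Y satisfy t₁(X) = t₁(Y) and s₂(X) = s₂(Y) (one boundary of each type in common), then all four boundary edges of X and Y agree. -/
import Mathlib


/-- An (edge-symmetric, strict) double groupoid, presented set-theoretically:
objects, arrows of type 1, arrows of type 2, and squares, with partially
defined compositions (total functions whose axioms are guarded by
composability conditions).  `s1 X`, `t1 X` are the faces of a square in
direction 1 (these are arrows of type 2), and `s2 X`, `t2 X` are the faces
in direction 2 (arrows of type 1).  `c1` is composition in direction 1,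
`c2` in direction 2; `iota1 a` is the `c1`-identity square on the type-2
arrow `a`, and `iota2 f` the `c2`-identity square on the type-1 arrow `f`.
Every square has inverses `inv1`, `inv2` in both directions. -/
structure DoubleGroupoid where
  Obj : Type
  A1 : Type
  A2 : Type
  Sq : Type
  src1 : A1 → Obj
  tgt1 : A1 → Obj
  src2 : A2 → Obj
  tgt2 : A2 → Obj
  id1 : Obj → A1
  id2 : Obj → A2
  comp1 : A1 → A1 → A1
  comp2 : A2 → A2 → A2
  s1 : Sq → A2
  t1 : Sq → A2
  s2 : Sq → A1
  t2 : Sq → A1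
  iota1 : A2 → Sq
  iota2 : A1 → Sq
  c1 : Sq → Sq → Sq
  c2 : Sq → Sq → Sq
  inv1 : Sq → Sq
  inv2 : Sq → Sq
  -- the two edge categories are groupoid-like
  src1_id : ∀ x, src1 (id1 x) = x
  tgt1_id : ∀ x, tgt1 (id1 x) = x
  src2_id : ∀ x, src2 (id2 x) = x
  tgt2_id : ∀ x, tgt2 (id2 x) = x
  comp1_src : ∀ f g, tgt1 f = src1 g → src1 (comp1 f g) = src1 f
  comp1_tgt : ∀ f g, tgt1 f = src1 g → tgt1 (comp1 f g) = tgt1 g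
  comp2_src : ∀ f g, tgt2 f = src2 g → src2 (comp2 f g) = src2 f
  comp2_tgt : ∀ f g, tgt2 f = src2 g → tgt2 (comp2 f g) = tgt2 g
  comp1_assoc : ∀ f g h, tgt1 f = src1 g → tgt1 g = src1 h →
    comp1 (comp1 f g) h = comp1 f (comp1 g h)
  comp2_assoc : ∀ f g h, tgt2 f = src2 g → tgt2 g = src2 h →
    comp2 (comp2 f g) h = comp2 f (comp2 g h)
  comp1_id_left : ∀ f, comp1 (id1 (src1 f)) f = f
  comp1_id_right : ∀ f, comp1 f (id1 (tgt1 f)) = f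
  comp2_id_left : ∀ f, comp2 (id2 (src2 f)) f = f
  comp2_id_right : ∀ f, comp2 f (id2 (tgt2 f)) = f
  ainv1 : A1 → A1
  ainv2 : A2 → A2
  ainv1_left : ∀ f, comp1 (ainv1 f) f = id1 (tgt1 f)
  ainv1_right : ∀ f, comp1 f (ainv1 f) = id1 (src1 f)
  ainv2_left : ∀ f, comp2 (ainv2 f) f = id2 (tgt2 f)
  ainv2_right : ∀ f, comp2 f (ainv2 f) = id2 (src2 f)
  -- corner compatibility of the four faces of a square
  corner_ss : ∀ X, src2 (s1 X) = src1 (s2 X)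
  corner_st : ∀ X, tgt2 (s1 X) = src1 (t2 X)
  corner_ts : ∀ X, src2 (t1 X) = tgt1 (s2 X)
  corner_tt : ∀ X, tgt2 (t1 X) = tgt1 (t2 X)
  -- faces of the identity squares
  s1_iota1 : ∀ a, s1 (iota1 a) = a
  t1_iota1 : ∀ a, t1 (iota1 a) = a
  s2_iota1 : ∀ a, s2 (iota1 a) = id1 (src2 a)
  t2_iota1 : ∀ a, t2 (iota1 a) = id1 (tgt2 a)
  s2_iota2 : ∀ f, s2 (iota2 f) = f
  t2_iota2 : ∀ f, t2 (iota2 f) = f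
  s1_iota2 : ∀ f, s1 (iota2 f) = id2 (src1 f)
  t1_iota2 : ∀ f, t1 (iota2 f) = id2 (tgt1 f)
  -- faces of composites
  c1_s1 : ∀ X Y, t1 X = s1 Y → s1 (c1 X Y) = s1 X
  c1_t1 : ∀ X Y, t1 X = s1 Y → t1 (c1 X Y) = t1 Y
  c1_s2 : ∀ X Y, t1 X = s1 Y → s2 (c1 X Y) = comp1 (s2 X) (s2 Y)
  c1_t2 : ∀ X Y, t1 X = s1 Y → t2 (c1 X Y) = comp1 (t2 X) (t2 Y)
  c2_s2 : ∀ X Y, t2 X = s2 Y → s2 (c2 X Y) = s2 X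
  c2_t2 : ∀ X Y, t2 X = s2 Y → t2 (c2 X Y) = t2 Y
  c2_s1 : ∀ X Y, t2 X = s2 Y → s1 (c2 X Y) = comp2 (s1 X) (s1 Y)
  c2_t1 : ∀ X Y, t2 X = s2 Y → t1 (c2 X Y) = comp2 (t1 X) (t1 Y)
  -- category laws for the square compositions
  c1_assoc : ∀ X Y Z, t1 X = s1 Y → t1 Y = s1 Z →
    c1 (c1 X Y) Z = c1 X (c1 Y Z)
  c2_assoc : ∀ X Y Z, t2 X = s2 Y → t2 Y = s2 Z →
    c2 (c2 X Y) Z = c2 X (c2 Y Z)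
  c1_id_left : ∀ X, c1 (iota1 (s1 X)) X = X
  c1_id_right : ∀ X, c1 X (iota1 (t1 X)) = X
  c2_id_left : ∀ X, c2 (iota2 (s2 X)) X = X
  c2_id_right : ∀ X, c2 X (iota2 (t2 X)) = X
  -- identity squares are functorial
  iota1_comp : ∀ a b, tgt2 a = src2 b → iota1 (comp2 a b) = c2 (iota1 a) (iota1 b)
  iota2_comp : ∀ f g, tgt1 f = src1 g → iota2 (comp1 f g) = c1 (iota2 f) (iota2 g)
  -- the interchange law
  interchange : ∀ X Y Z W, t1 X = s1 Y → t2 X = s2 Z → t2 Y = s2 W → t1 Z = s1 W →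
    c2 (c1 X Y) (c1 Z W) = c1 (c2 X Z) (c2 Y W)
  -- inverses of squares in each direction
  inv1_s1 : ∀ X, s1 (inv1 X) = t1 X
  inv1_t1 : ∀ X, t1 (inv1 X) = s1 X
  inv1_s2 : ∀ X, s2 (inv1 X) = ainv1 (s2 X)
  inv1_t2 : ∀ X, t2 (inv1 X) = ainv1 (t2 X)
  inv2_s2 : ∀ X, s2 (inv2 X) = t2 X
  inv2_t2 : ∀ X, t2 (inv2 X) = s2 X
  inv2_s1 : ∀ X, s1 (inv2 X) = ainv2 (s1 X)
  inv2_t1 : ∀ X, t1 (inv2 X) = ainv2 (t1 X)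
  c1_inv1 : ∀ X, c1 X (inv1 X) = iota1 (s1 X)
  inv1_c1 : ∀ X, c1 (inv1 X) X = iota1 (t1 X)
  c2_inv2 : ∀ X, c2 X (inv2 X) = iota2 (s2 X)
  inv2_c2 : ∀ X, c2 (inv2 X) X = iota2 (t2 X)

namespace DoubleGroupoid

variable (D : DoubleGroupoid)

/-- The transmutation `u · Y` : the composite of the 2×2 barycentric
subdivision with `u` in the depth-0 (source-corner) position, `Y` in the
depth-2 (sink-corner) position, and identity squares in the remaining
positions. -/
def transmute (u Y : D.Sq) : D.Sq :=
  D.c2 (D.c1 u (D.iota2 (D.s2 Y))) (D.c1 (D.iota1 (D.s1 Y)) Y)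

/-- The source corner object of a square. -/
def srcObj (X : D.Sq) : D.Obj := D.src1 (D.s2 X)

/-- The sink (target corner) object of a square. -/
def sinkObj (X : D.Sq) : D.Obj := D.tgt1 (D.t2 X)

/-- Membership in the core groupoid `τ⌟`: both target faces are identities
at the sink object. -/
def IsCore (u : D.Sq) : Prop :=
  D.t1 u = D.id2 (D.sinkObj u) ∧ D.t2 u = D.id1 (D.sinkObj u)

/-- Membership in the core bundle `τ•` over `p`: all four boundary faces
are identities at `p`. -/
def IsBundle (u : D.Sq) (p : D.Obj) : Prop :=
  D.s1 u = D.id2 p ∧ D.t1 u = D.id2 p ∧ D.s2 u = D.id1 p ∧ D.t2 u = D.id1 p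

end DoubleGroupoid

namespace DoubleGroupoid

variable (D : DoubleGroupoid)

lemma ainv1_src (f : D.A1) : D.src1 (D.ainv1 f) = D.tgt1 f := by
  have h := D.corner_ss (D.inv1 (D.iota2 f))
  simpa [D.inv1_s1, D.inv1_s2, D.t1_iota2, D.s2_iota2, D.src2_id] using h.symm

lemma ainv1_tgt (f : D.A1) : D.tgt1 (D.ainv1 f) = D.src1 f := by
  have h := D.corner_ts (D.inv1 (D.iota2 f))
  simpa [D.inv1_t1, D.inv1_s2, D.s1_iota2, D.s2_iota2, D.src2_id] using h.symm

lemma ainv2_src (a : D.A2) : D.src2 (D.ainv2 a) = D.tgt2 a := by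
  have h := D.corner_ss (D.inv2 (D.iota1 a))
  simpa [D.inv2_s1, D.inv2_s2, D.s1_iota1, D.t2_iota1, D.src1_id] using h

lemma ainv2_tgt (a : D.A2) : D.tgt2 (D.ainv2 a) = D.src2 a := by
  have h := D.corner_st (D.inv2 (D.iota1 a))
  simpa [D.inv2_s1, D.inv2_t2, D.s1_iota1, D.s2_iota1, D.src1_id] using h

/-- Cancellation in the type-2 edge groupoid. -/
lemma cancel2 {a b : D.A2} {q : D.Obj} (hc : D.tgt2 (D.ainv2 a) = D.src2 b)
    (h : D.comp2 (D.ainv2 a) b = D.id2 q) : a = b := by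
  have hq : D.src2 (D.id2 q) = q := D.src2_id q
  have hsrc : D.tgt2 a = q := by
    rw [← h, D.comp2_src _ _ hc, D.ainv2_src] at hq
    exact hq
  calc a = D.comp2 a (D.id2 (D.tgt2 a)) := (D.comp2_id_right a).symm
    _ = D.comp2 a (D.comp2 (D.ainv2 a) b) := by rw [hsrc, ← h]
    _ = D.comp2 (D.comp2 a (D.ainv2 a)) b := by
        rw [D.comp2_assoc a (D.ainv2 a) b (by rw [D.ainv2_src]) hc]
    _ = D.comp2 (D.id2 (D.src2 b)) b := by
        rw [D.ainv2_right, ← hc, D.ainv2_tgt]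
    _ = b := D.comp2_id_left b

/-- Cancellation in the type-1 edge groupoid. -/
lemma cancel1 {f g : D.A1} {q : D.Obj} (hc : D.tgt1 f = D.src1 (D.ainv1 g))
    (h : D.comp1 f (D.ainv1 g) = D.id1 q) : f = g := by
  have hfg : D.tgt1 f = D.tgt1 g := by rw [hc, D.ainv1_src]
  have hg : D.src1 g = q := by
    have ht := D.comp1_tgt f (D.ainv1 g) hc
    rw [h, D.tgt1_id, D.ainv1_tgt] at ht
    exact ht.symm
  calc f = D.comp1 f (D.id1 (D.tgt1 f)) := (D.comp1_id_right f).symm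
    _ = D.comp1 f (D.comp1 (D.ainv1 g) g) := by rw [hfg, ← D.ainv1_left g]
    _ = D.comp1 (D.comp1 f (D.ainv1 g)) g := by
        rw [D.comp1_assoc f (D.ainv1 g) g hc (D.ainv1_tgt g)]
    _ = D.comp1 (D.id1 (D.src1 g)) g := by rw [h, hg]
    _ = g := D.comp1_id_left g

end DoubleGroupoid

/-- A double groupoid is exclusive (`τ⌟ = τ•`) iff the boundary of
any square is determined by one boundary edge of each type: if `t₁ X = t₁ Y`
and `s₂ X = s₂ Y` then all four boundary edges of `X` and `Y` agree. -/
theorem exclusive_iff_boundary_determined (D : DoubleGroupoid) :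
    (∀ u : D.Sq, D.IsCore u → D.IsBundle u (D.sinkObj u)) ↔
    (∀ X Y : D.Sq, D.t1 X = D.t1 Y → D.s2 X = D.s2 Y →
      D.s1 X = D.s1 Y ∧ D.t2 X = D.t2 Y) := by
  constructor
  · -- exclusive → boundary determined
    intro excl X Y hT hS
    set a := D.s1 X with ha
    set b := D.s1 Y with hb
    set f := D.t2 X with hf
    set g := D.t2 Y with hg
    -- composability for u := c2 (inv2 X) Y
    have h1 : D.t2 (D.inv2 X) = D.s2 Y := by rw [D.inv2_t2, hS]
    set u := D.c2 (D.inv2 X) Y with hu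
    have hu_t1 : D.t1 u = D.id2 (D.tgt2 (D.t1 X)) := by
      rw [hu, D.c2_t1 _ _ h1, D.inv2_t1, hT, ← hT, D.ainv2_left]
    have hu_s1 : D.s1 u = D.comp2 (D.ainv2 a) b := by
      rw [hu, D.c2_s1 _ _ h1, D.inv2_s1]
    have hu_s2 : D.s2 u = f := by rw [hu, D.c2_s2 _ _ h1, D.inv2_s2]
    have hu_t2 : D.t2 u = g := by rw [hu, D.c2_t2 _ _ h1]
    -- composability for w := c1 u (inv1 (iota2 g))
    have htgt : D.tgt1 g = D.tgt2 (D.t1 X) := by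
      rw [hg, ← D.corner_tt Y, hT]
    have h2 : D.t1 u = D.s1 (D.inv1 (D.iota2 g)) := by
      rw [hu_t1, D.inv1_s1, D.t1_iota2, htgt]
    set B := D.inv1 (D.iota2 g) with hB
    set w := D.c1 u B with hw
    set q := D.src1 g with hq
    have hw_t1 : D.t1 w = D.id2 q := by
      rw [hw, D.c1_t1 _ _ h2, hB, D.inv1_t1, D.s1_iota2]
    have hw_t2 : D.t2 w = D.id1 q := by
      rw [hw, D.c1_t2 _ _ h2, hB, D.inv1_t2, D.t2_iota2, hu_t2, D.ainv1_right]
    have hw_s1 : D.s1 w = D.comp2 (D.ainv2 a) b := by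
      rw [hw, D.c1_s1 _ _ h2, hu_s1]
    have hw_s2 : D.s2 w = D.comp1 f (D.ainv1 g) := by
      rw [hw, D.c1_s2 _ _ h2, hB, D.inv1_s2, D.s2_iota2, hu_s2]
    have hsink : D.sinkObj w = q := by
      rw [DoubleGroupoid.sinkObj, hw_t2, D.tgt1_id]
    have hcore : D.IsCore w := by
      constructor
      · rw [hsink, hw_t1]
      · rw [hsink, hw_t2]
    obtain ⟨e1, _, e2, _⟩ := excl w hcore
    rw [hsink] at e1 e2
    constructor
    · -- s1 X = s1 Y from cancellation in A2
      refine D.cancel2 ?_ (by rw [← hw_s1, e1])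
      rw [D.ainv2_tgt, ha, D.corner_ss, hS, ← D.corner_ss Y]
    · -- t2 X = t2 Y from cancellation in A1
      refine D.cancel1 ?_ (by rw [← hw_s2, e2])
      rw [D.ainv1_src, hf, ← D.corner_tt X, hT, D.corner_tt]
  · -- boundary determined → exclusive
    intro det u hcore
    obtain ⟨h1, h2⟩ := hcore
    set p := D.sinkObj u with hp
    set f := D.s2 u with hf
    have htf : D.tgt1 f = p := by
      rw [hf, ← D.corner_ts u, h1, D.src2_id]
    -- Y := c1 (iota2 f) (iota1 (id2 p))
    have hcomp : D.t1 (D.iota2 f) = D.s1 (D.iota1 (D.id2 p)) := by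
      rw [D.t1_iota2, D.s1_iota1, htf]
    set Y := D.c1 (D.iota2 f) (D.iota1 (D.id2 p)) with hY
    have hY_t1 : D.t1 Y = D.id2 p := by
      rw [hY, D.c1_t1 _ _ hcomp, D.t1_iota1]
    have hY_s2 : D.s2 Y = f := by
      rw [hY, D.c1_s2 _ _ hcomp, D.s2_iota2, D.s2_iota1, D.src2_id, ← htf,
        D.comp1_id_right]
    have hY_t2 : D.t2 Y = f := by
      rw [hY, D.c1_t2 _ _ hcomp, D.t2_iota2, D.t2_iota1, D.tgt2_id, ← htf,
        D.comp1_id_right]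
    have hY_s1 : D.s1 Y = D.id2 (D.src1 f) := by
      rw [hY, D.c1_s1 _ _ hcomp, D.s1_iota2]
    obtain ⟨e1, e2⟩ := det u Y (by rw [h1, hY_t1]) hY_s2.symm
    have hfid : f = D.id1 p := by rw [← hY_t2, ← e2, h2]
    refine ⟨?_, h1, hfid, h2⟩
    rw [e1, hY_s1, hfid, D.src1_id]
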